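/- Under the hypotheses of the scattering norm decay theorem, and writing Δ_{w,a} = D_a^* M_w D_a, one has for each k ≥ 1: ‖g_k‖ ≤ √t (1 − e^{−tλ_max})^{(k−1)/2} ‖M_{√w} D_a f‖. -/

import Mathlib

open Matrix Real MeasureTheory ProbabilityTheory

variable {V : Type*} [Fintype V] [DecidableEq V]

/-- The difference operator `(D_a f)(i,j) = f j - e^{a(i,j)} f i`, as a matrix from
`ℓ²(V)` to `ℓ²(E)`. -/
noncomputable def Dmat (E : Finset (V × V)) (a : V × V → ℝ) : Matrix E V ℝ :=
  fun e v => (if v = (e : V × V).2 then (1 : ℝ) else 0) -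
    Real.exp (a e) * (if v = (e : V × V).1 then (1 : ℝ) else 0)

/-- The Laplacian `Δ_{w,a} = D_a^* M_w D_a` associated with the quadratic form
`Q_{w,a}(f) = Σ_{(i,j)∈E} w(i,j) |e^{a(i,j)} f i − f j|²`. -/
noncomputable def Lap (E : Finset (V × V)) (w a : V × V → ℝ) : Matrix V V ℝ :=
  (Dmat E a)ᵀ * Matrix.diagonal (fun e : E => w e) * Dmat E a

/-- Weak connectivity of a directed graph: any two vertices are joined by a chain of
edges ignoring orientation. -/
def WeaklyConnected (E : Finset (V × V)) : Prop :=
  ∀ u v : V, Relation.ReflTransGen (fun x y => (x, y) ∈ E ∨ (y, x) ∈ E) u v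

/-!
Diagonalising `Δ`, the operator `S_t² = 1 - e^{-tΔ}` is the functional calculus of `Δ` by
`x ↦ 1 - e^{-tx}`, which is at most `tx` everywhere and at most `1 - e^{-tλ_max}` on the spectrum.
In the Loewner order this gives `S_t² ≤ tΔ` and `S_t² ≤ 1 - e^{-tλ_max}`. Hence the first step of
the iteration has `‖g₁‖² ≤ t ⟨Δ|f|, |f|⟩ ≤ t ⟨Δf, f⟩` (taking absolute values can only shrink each
edge term `|f j - e^{a(i,j)} f i|`), and every further step multiplies `‖g_k‖²` by at most
`1 - e^{-tλ_max}`.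
-/

open scoped MatrixOrder

namespace Matrix

theorem mem_spectrum_iff_exists_mulVec_eq_smul {n K : Type*} [Fintype n] [DecidableEq n] [Field K]
    (A : Matrix n n K) (μ : K) : μ ∈ spectrum K A ↔ ∃ v : n → K, v ≠ 0 ∧ A *ᵥ v = μ • v := by
  rw [← spectrum_toLin', ← Module.End.hasEigenvalue_iff_mem_spectrum,
    Module.End.hasEigenvalue_iff, Submodule.ne_bot_iff]
  simp only [Module.End.mem_eigenspace_iff, toLin'_apply]
  exact exists_congr fun _ => and_comm

theorem IsHermitian.exp_eq_cfc {n 𝕜 : Type*} [Fintype n] [DecidableEq n] [RCLike 𝕜]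
    {A : Matrix n n 𝕜} (hA : A.IsHermitian) : NormedSpace.exp A = cfc Real.exp A := by
  have hconj := exp_units_conj (Unitary.toUnits hA.eigenvectorUnitary)
    (diagonal (RCLike.ofReal ∘ hA.eigenvalues))
  simp only [Unitary.val_toUnits_apply, Unitary.val_inv_toUnits_apply, ← Unitary.star_eq_inv,
    Unitary.coe_star] at hconj
  conv_lhs => rw [hA.spectral_theorem, Unitary.conjStarAlgAut_apply]
  rw [hA.cfc_eq, IsHermitian.cfc, Unitary.conjStarAlgAut_apply, hconj, exp_diagonal]
  congr 3
  funext i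
  rw [Pi.exp_def, Function.comp_apply, Function.comp_apply, Real.exp_eq_exp_ℝ]
  exact (NormedSpace.map_exp (algebraMap ℝ 𝕜) RCLike.continuous_ofReal _).symm

variable {n : Type*} [Fintype n]

theorem dotProduct_mulVec_le_of_le {A B : Matrix n n ℝ} (h : A ≤ B) (x : n → ℝ) :
    x ⬝ᵥ (A *ᵥ x) ≤ x ⬝ᵥ (B *ᵥ x) := by
  have := (le_iff.mp h).dotProduct_mulVec_nonneg x
  rwa [star_trivial, sub_mulVec, dotProduct_sub, sub_nonneg] at this

theorem IsHermitian.mulVec_dotProduct_mulVec_self {S : Matrix n n ℝ} (hS : S.IsHermitian)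
    (x : n → ℝ) : (S *ᵥ x) ⬝ᵥ (S *ᵥ x) = x ⬝ᵥ ((S * S) *ᵥ x) := by
  rw [← mulVec_mulVec, dotProduct_mulVec, ← mulVec_transpose,
    ← conjTranspose_eq_transpose_of_trivial, hS.eq, dotProduct_comm]

variable [DecidableEq n]

theorem IsHermitian.one_sub_exp_neg_smul_eq_cfc {A : Matrix n n ℝ} (hA : A.IsHermitian) (t : ℝ) :
    1 - NormedSpace.exp ((-t) • A) = cfc (fun x => 1 - Real.exp (-(t * x))) A := by
  rw [(hA.smul (IsSelfAdjoint.all (-t))).exp_eq_cfc, ← cfc_comp_smul (-t) Real.exp A,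
    ← cfc_const_one ℝ A, ← cfc_sub (fun _ => 1) (fun x => Real.exp ((-t) • x)) A]
  simp only [smul_eq_mul, neg_mul]

theorem IsHermitian.one_sub_exp_neg_smul_le_smul {A : Matrix n n ℝ} (hA : A.IsHermitian) (t : ℝ) :
    1 - NormedSpace.exp ((-t) • A) ≤ t • A := by
  rw [hA.one_sub_exp_neg_smul_eq_cfc, ← cfc_const_mul_id t A]
  exact cfc_mono fun x _ => by linarith [Real.add_one_le_exp (-(t * x))]

theorem IsHermitian.one_sub_exp_neg_smul_le_algebraMap {A : Matrix n n ℝ} (hA : A.IsHermitian)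
    {t l : ℝ} (ht : 0 ≤ t) (hl : ∀ x ∈ spectrum ℝ A, x ≤ l) :
    1 - NormedSpace.exp ((-t) • A) ≤ algebraMap ℝ _ (1 - Real.exp (-(t * l))) := by
  rw [hA.one_sub_exp_neg_smul_eq_cfc]
  refine cfc_le_algebraMap _ _ _ fun x hx => ?_
  gcongr
  exact hl x hx

end Matrix

theorem sq_abs_sub_mul_abs_le {c : ℝ} (hc : 0 ≤ c) (x y : ℝ) :
    (|y| - c * |x|) ^ 2 ≤ (y - c * x) ^ 2 := by
  rw [← abs_of_nonneg hc, ← abs_mul, abs_of_nonneg hc]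
  exact sq_le_sq.mpr (abs_abs_sub_abs_le_abs_sub y (c * x))

section Laplacian

variable (E : Finset (V × V)) (w a : V × V → ℝ)

theorem Dmat_mulVec (x : V → ℝ) (e : E) :
    (Dmat E a *ᵥ x) e = x (e : V × V).2 - Real.exp (a e) * x (e : V × V).1 := by
  simp [Dmat, mulVec, dotProduct, sub_mul, Finset.sum_sub_distrib]

theorem dotProduct_Lap_mulVec (x : V → ℝ) :
    x ⬝ᵥ (Lap E w a *ᵥ x) = ∑ e : E, w e * ((Dmat E a *ᵥ x) e) ^ 2 := by
  rw [Lap, ← mulVec_mulVec, ← mulVec_mulVec, dotProduct_mulVec, vecMul_transpose]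
  simp only [dotProduct, mulVec_diagonal]
  exact Finset.sum_congr rfl fun e _ => by ring

omit [Fintype V] in
theorem Lap_isHermitian : (Lap E w a).IsHermitian := by
  rw [IsHermitian, Lap, conjTranspose_eq_transpose_of_trivial, transpose_mul, transpose_mul,
    transpose_transpose, diagonal_transpose, Matrix.mul_assoc]

variable {E w}

theorem Lap_posSemidef (hw : ∀ e ∈ E, 0 ≤ w e) : (Lap E w a).PosSemidef :=
  .of_dotProduct_mulVec_nonneg (Lap_isHermitian E w a) fun x => by
    rw [star_trivial, dotProduct_Lap_mulVec]
    exact Finset.sum_nonneg fun e _ => mul_nonneg (hw e e.2) (sq_nonneg _)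

theorem dotProduct_Lap_mulVec_abs_le (hw : ∀ e ∈ E, 0 ≤ w e) (x : V → ℝ) :
    (fun i => |x i|) ⬝ᵥ (Lap E w a *ᵥ fun i => |x i|) ≤ x ⬝ᵥ (Lap E w a *ᵥ x) := by
  simp only [dotProduct_Lap_mulVec, Dmat_mulVec]
  exact Finset.sum_le_sum fun e _ =>
    mul_le_mul_of_nonneg_left (sq_abs_sub_mul_abs_le (Real.exp_pos _).le _ _) (hw e e.2)

end Laplacian

theorem dotProduct_self_scatteringIterate_le {S Δ : Matrix V V ℝ} {t b : ℝ} (hb : 0 ≤ b)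
    (hS : S.IsHermitian) (hSt : S * S ≤ t • Δ) (hSb : S * S ≤ algebraMap ℝ _ b)
    {g : ℕ → V → ℝ} (hg : ∀ k, g (k + 1) = S *ᵥ fun i => |g k i|) (n : ℕ) :
    g (n + 1) ⬝ᵥ g (n + 1) ≤
      b ^ n * (t * ((fun i => |g 0 i|) ⬝ᵥ (Δ *ᵥ fun i => |g 0 i|))) := by
  induction n with
  | zero =>
    rw [hg, hS.mulVec_dotProduct_mulVec_self, pow_zero, one_mul]
    simpa only [smul_mulVec, dotProduct_smul, smul_eq_mul] using
      dotProduct_mulVec_le_of_le hSt _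
  | succ n ih =>
    have habs : (fun i => |g (n + 1) i|) ⬝ᵥ (fun i => |g (n + 1) i|) = g (n + 1) ⬝ᵥ g (n + 1) :=
      Finset.sum_congr rfl fun i _ => abs_mul_abs_self _
    calc g (n + 1 + 1) ⬝ᵥ g (n + 1 + 1)
        ≤ b * (g (n + 1) ⬝ᵥ g (n + 1)) := by
          rw [hg, hS.mulVec_dotProduct_mulVec_self, ← habs]
          simpa only [Algebra.algebraMap_eq_smul_one, smul_mulVec, one_mulVec,
            dotProduct_smul, smul_eq_mul] using dotProduct_mulVec_le_of_le hSb _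
      _ ≤ b * (b ^ n * (t * _)) := mul_le_mul_of_nonneg_left ih hb
      _ = _ := by ring

theorem stmt_11_general (E : Finset (V × V)) (w a : V × V → ℝ)
    (hw : ∀ e ∈ E, 0 < w e)
    (t : ℝ) (ht : 0 < t) (lmax : ℝ)
    (hlmax : IsGreatest {μ : ℝ | ∃ f : V → ℝ, f ≠ 0 ∧
      (Lap E w a).mulVec f = μ • f} lmax)
    (S : Matrix V V ℝ) (hS : S.PosSemidef)
    (hSsq : S * S = 1 - NormedSpace.exp ((-t) • Lap E w a))
    (f : V → ℝ) (g : ℕ → V → ℝ) (hg0 : g 0 = f)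
    (hg : ∀ k, g (k + 1) = S.mulVec (fun i => |g k i|))
    (k : ℕ) (hk : 1 ≤ k) :
    Real.sqrt (∑ i, (g k i) ^ 2) ≤
      Real.sqrt t * (1 - Real.exp (-(t * lmax))) ^ (((k : ℝ) - 1) / 2) *
        Real.sqrt (∑ e : E, w e * ((Dmat E a).mulVec f e) ^ 2) := by
  have hw₀ : ∀ e ∈ E, 0 ≤ w e := fun e he => (hw e he).le
  have hΔ := Lap_isHermitian E w a
  have hspec : ∀ x ∈ spectrum ℝ (Lap E w a), x ≤ lmax := fun x hx =>
    hlmax.2 ((mem_spectrum_iff_exists_mulVec_eq_smul _ x).mp hx)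
  have hlmax₀ : 0 ≤ lmax := (posSemidef_iff_isHermitian_and_spectrum_nonneg.mp
    (Lap_posSemidef a hw₀)).2 ((mem_spectrum_iff_exists_mulVec_eq_smul _ lmax).mpr hlmax.1)
  have hb : 0 ≤ 1 - Real.exp (-(t * lmax)) := by
    rw [sub_nonneg, Real.exp_le_one_iff, neg_nonpos]
    positivity
  obtain ⟨n, rfl⟩ := Nat.exists_eq_add_of_le' hk
  have hdecay := dotProduct_self_scatteringIterate_le hb hS.isHermitian
    (hSsq ▸ hΔ.one_sub_exp_neg_smul_le_smul t)
    (hSsq ▸ hΔ.one_sub_exp_neg_smul_le_algebraMap ht.le hspec) hg n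
  rw [hg0] at hdecay
  have hQ := (dotProduct_Lap_mulVec_abs_le a hw₀ f).trans (dotProduct_Lap_mulVec E w a f).le
  have hnorm : ∑ i, g (n + 1) i ^ 2 = g (n + 1) ⬝ᵥ g (n + 1) := by simp only [dotProduct, sq]
  calc √(∑ i, g (n + 1) i ^ 2)
      ≤ √((1 - Real.exp (-(t * lmax))) ^ n * (t * ∑ e : E, w e * (Dmat E a *ᵥ f) e ^ 2)) := by
        rw [hnorm]
        exact Real.sqrt_le_sqrt (hdecay.trans (by gcongr))
    _ = _ := by
        rw [Real.sqrt_mul (pow_nonneg hb n), Real.sqrt_mul ht.le, Real.sqrt_eq_rpow,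
          ← Real.rpow_natCast, ← Real.rpow_mul hb]
        push_cast
        ring_nf

/-- refined scattering decay
`‖g_k‖ ≤ √t (1-e^{-tλmax})^{(k-1)/2} ‖M_{√w} D_a f‖`. -/
theorem stmt_11 (E : Finset (V × V)) (w a : V × V → ℝ)
    (hconn : WeaklyConnected E) (hw : ∀ e ∈ E, 0 < w e)
    (t : ℝ) (ht : 0 < t) (lmax : ℝ)
    (hlmax : IsGreatest {μ : ℝ | ∃ f : V → ℝ, f ≠ 0 ∧
      (Lap E w a).mulVec f = μ • f} lmax)
    (S : Matrix V V ℝ) (hS : S.PosSemidef)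
    (hSsq : S * S = 1 - NormedSpace.exp ((-t) • Lap E w a))
    (f : V → ℝ) (g : ℕ → V → ℝ) (hg0 : g 0 = f)
    (hg : ∀ k, g (k + 1) = S.mulVec (fun i => |g k i|))
    (k : ℕ) (hk : 1 ≤ k) :
    Real.sqrt (∑ i, (g k i) ^ 2) ≤
      Real.sqrt t * (1 - Real.exp (-(t * lmax))) ^ (((k : ℝ) - 1) / 2) *
        Real.sqrt (∑ e : E, w e * ((Dmat E a).mulVec f e) ^ 2) :=
  stmt_11_general E w a hw t ht lmax hlmax S hS hSsq f g hg0 hg k hk
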